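/- arXiv:1311.1682 — 6 statements merged into one kernel-verified Lean document; each statement's English description precedes it below -/
import Mathlib

section
/- Let n be a positive integer and g : ℤ → ℂ. Then for every integer l with -n² ≤ l ≤ n²-1, the discrete Fourier transform of the discrete derivative satisfies (Dg)^_n(l) = ψ_n(l) · ĝ_n(l) - E_n(l). -/
open Complex Finset

/-- The discrete derivative: `Dg(j) = n·(g(j+1) - g(j))` for `-n² ≤ j ≤ n²-2`,
and `Dg(n²-1) = 0`. -/
noncomputable def discDeriv (n : ℕ) (g : ℤ → ℂ) : ℤ → ℂ :=
  fun j => if j = (n : ℤ) ^ 2 - 1 then 0 else (n : ℂ) * (g (j + 1) - g j)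

/-- The discrete shift: `Sg(j) = g(j+1)` for `-n² ≤ j ≤ n²-2`, and `Sg(n²-1) = 0`. -/
noncomputable def discShift (n : ℕ) (g : ℤ → ℂ) : ℤ → ℂ :=
  fun j => if j = (n : ℤ) ^ 2 - 1 then 0 else g (j + 1)
/-- The discrete Fourier transform `ĝ_n(l) = (1/n) ∑_{j=-n²}^{n²-1} g(j) e^{-π i j l/n²}`. -/
noncomputable def discFT (n : ℕ) (g : ℤ → ℂ) : ℤ → ℂ :=
  fun l => (1 / (n : ℂ)) * ∑ j ∈ Finset.Icc (-(n : ℤ) ^ 2) ((n : ℤ) ^ 2 - 1),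
    g j * Complex.exp (-((Real.pi : ℂ) * Complex.I * (j : ℂ) * (l : ℂ)) / (n : ℂ) ^ 2)

/-- `ψ_n(l) = n·(e^{π i l/n²} - 1)`. -/
noncomputable def psiF (n : ℕ) (l : ℤ) : ℂ :=
  (n : ℂ) * (Complex.exp ((Real.pi : ℂ) * Complex.I * (l : ℂ) / (n : ℂ) ^ 2) - 1)

/-- `φ_n(l) = n·(e^{-π i l/n²} - 1)`. -/
noncomputable def phiF (n : ℕ) (l : ℤ) : ℂ :=
  (n : ℂ) * (Complex.exp (-((Real.pi : ℂ) * Complex.I * (l : ℂ)) / (n : ℂ) ^ 2) - 1)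

/-- `C_n(l) = g(n²-1)·e^{-π i (n²-1) l/n²} - g(-n²)·e^{π i l}`. -/
noncomputable def CF (n : ℕ) (g : ℤ → ℂ) (l : ℤ) : ℂ :=
  g ((n : ℤ) ^ 2 - 1) *
      Complex.exp (-((Real.pi : ℂ) * Complex.I * ((n : ℂ) ^ 2 - 1) * (l : ℂ)) / (n : ℂ) ^ 2) -
    g (-(n : ℤ) ^ 2) * Complex.exp ((Real.pi : ℂ) * Complex.I * (l : ℂ))

/-- `D_n(l) = -(1/n)·g(-n²)·e^{π i l/n²}·e^{π i l}`. -/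
noncomputable def DF (n : ℕ) (g : ℤ → ℂ) (l : ℤ) : ℂ :=
  -(1 / (n : ℂ)) * g (-(n : ℤ) ^ 2) *
    Complex.exp ((Real.pi : ℂ) * Complex.I * (l : ℂ) / (n : ℂ) ^ 2) *
    Complex.exp ((Real.pi : ℂ) * Complex.I * (l : ℂ))

/-- `C'_n(l) = -(Dg)(-n²)·e^{π i l}`. -/
noncomputable def CF' (n : ℕ) (g : ℤ → ℂ) (l : ℤ) : ℂ :=
  -(discDeriv n g (-(n : ℤ) ^ 2)) * Complex.exp ((Real.pi : ℂ) * Complex.I * (l : ℂ))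

/-- `D'_n(l) = -(1/n)·(Dg)(-n²)·e^{π i l/n²}·e^{π i l}`. -/
noncomputable def DF' (n : ℕ) (g : ℤ → ℂ) (l : ℤ) : ℂ :=
  -(1 / (n : ℂ)) * discDeriv n g (-(n : ℤ) ^ 2) *
    Complex.exp ((Real.pi : ℂ) * Complex.I * (l : ℂ) / (n : ℂ) ^ 2) *
    Complex.exp ((Real.pi : ℂ) * Complex.I * (l : ℂ))

/-- `E_n(l) = φ_n(l)·D_n(l) - C_n(l)`. -/
noncomputable def EF (n : ℕ) (g : ℤ → ℂ) (l : ℤ) : ℂ :=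
  phiF n l * DF n g l - CF n g l

/-- `F_n(l) = ψ_n(l)·φ_n(l)·D_n(l) - ψ_n(l)·C_n(l) + φ_n(l)·D'_n(l) - C'_n(l)`. -/
noncomputable def FF (n : ℕ) (g : ℤ → ℂ) (l : ℤ) : ℂ :=
  psiF n l * phiF n l * DF n g l - psiF n l * CF n g l + phiF n l * DF' n g l - CF' n g l

/-! Summation by parts. The Fourier weight `e(j) = exp(-π i j l / n²)` satisfies
`e(j - 1) = exp(π i l / n²) · e(j)`, so moving the difference `g(j + 1) - g(j)` onto the weight
produces `ψ_n(l) · ĝ_n(l)` plus the two boundary terms at `j = -n²` and `j = n² - 1`; these make up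
`E_n(l)` once `φ_n(l) · exp(π i l / n²) = -ψ_n(l)` is used. -/

theorem sum_Ico_sub_mul_eq_of_shift {R : Type*} [CommRing R] (g e : ℤ → R) (c : R)
    (he : ∀ j, e (j - 1) = c * e j) {a b : ℤ} (hab : a ≤ b) :
    ∑ j ∈ Ico a b, (g (j + 1) - g j) * e j =
      (c - 1) * ∑ j ∈ Icc a b, g j * e j - c * (g a * e a) + g b * e b := by
  have hshift : ∑ j ∈ Ico a b, g (j + 1) * e j = c * ∑ j ∈ Ioc a b, g j * e j := by
    rw [mul_sum, ← Icc_add_one_left_eq_Ioc, ← Ico_add_one_right_eq_Icc, ← sum_Ico_add']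
    refine sum_congr rfl fun j _ => ?_
    have hj := he (j + 1)
    rw [add_sub_cancel_right] at hj
    rw [hj]
    ring
  have hbot := add_sum_Ioc_eq_sum_Icc (f := fun j => g j * e j) hab
  have htop := sum_Ico_add_eq_sum_Icc (f := fun j => g j * e j) hab
  simp only [sub_mul, sum_sub_distrib, hshift]
  linear_combination c * hbot - htop

theorem sum_Icc_discDeriv_mul {n : ℕ} (hn : 0 < n) (g e : ℤ → ℂ) :
    ∑ j ∈ Icc (-(n : ℤ) ^ 2) ((n : ℤ) ^ 2 - 1), discDeriv n g j * e j =
      n * ∑ j ∈ Ico (-(n : ℤ) ^ 2) ((n : ℤ) ^ 2 - 1), (g (j + 1) - g j) * e j := by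
  have hN : (1 : ℤ) ≤ (n : ℤ) ^ 2 := one_le_pow₀ (by exact_mod_cast hn)
  rw [← sum_Ico_add_eq_sum_Icc (by omega), discDeriv, if_pos rfl, zero_mul, add_zero, mul_sum]
  refine sum_congr rfl fun j hj => ?_
  rw [discDeriv, if_neg (mem_Ico.mp hj).2.ne, mul_assoc]

noncomputable def discFTWeight (n : ℕ) (l j : ℤ) : ℂ :=
  exp (-((Real.pi : ℂ) * I * (j : ℂ) * (l : ℂ)) / (n : ℂ) ^ 2)

theorem discFT_eq_sum (n : ℕ) (g : ℤ → ℂ) (l : ℤ) :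
    discFT n g l = 1 / (n : ℂ) *
      ∑ j ∈ Icc (-(n : ℤ) ^ 2) ((n : ℤ) ^ 2 - 1), g j * discFTWeight n l j :=
  rfl

theorem discFTWeight_sub_one (n : ℕ) (l j : ℤ) :
    discFTWeight n l (j - 1) =
      exp ((Real.pi : ℂ) * I * (l : ℂ) / (n : ℂ) ^ 2) * discFTWeight n l j := by
  rw [discFTWeight, discFTWeight, ← exp_add]
  push_cast
  ring_nf

theorem discFTWeight_neg_sq {n : ℕ} (hn : 0 < n) (l : ℤ) :
    discFTWeight n l (-(n : ℤ) ^ 2) = exp ((Real.pi : ℂ) * I * (l : ℂ)) := by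
  have hn0 : (n : ℂ) ≠ 0 := Nat.cast_ne_zero.mpr hn.ne'
  rw [discFTWeight]
  push_cast
  field_simp

theorem EF_eq_boundary_terms {n : ℕ} (hn : 0 < n) (g : ℤ → ℂ) (l : ℤ) :
    EF n g l = exp ((Real.pi : ℂ) * I * (l : ℂ) / (n : ℂ) ^ 2) *
        (g (-(n : ℤ) ^ 2) * discFTWeight n l (-(n : ℤ) ^ 2)) -
      g ((n : ℤ) ^ 2 - 1) * discFTWeight n l ((n : ℤ) ^ 2 - 1) := by
  have hn0 : (n : ℂ) ≠ 0 := Nat.cast_ne_zero.mpr hn.ne'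
  have hc := exp_ne_zero ((Real.pi : ℂ) * I * (l : ℂ) / (n : ℂ) ^ 2)
  rw [discFTWeight_neg_sq hn, EF, phiF, DF, CF, discFTWeight, neg_div, exp_neg]
  push_cast
  field_simp
  ring

theorem discFT_deriv_general (n : ℕ) (hn : 0 < n) (g : ℤ → ℂ) (l : ℤ) :
    discFT n (discDeriv n g) l = psiF n l * discFT n g l - EF n g l := by
  have hn0 : (n : ℂ) ≠ 0 := Nat.cast_ne_zero.mpr hn.ne'
  have hN : (1 : ℤ) ≤ (n : ℤ) ^ 2 := one_le_pow₀ (by exact_mod_cast hn)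
  rw [discFT_eq_sum, sum_Icc_discDeriv_mul hn,
    sum_Ico_sub_mul_eq_of_shift _ _ _ (discFTWeight_sub_one n l) (by omega), discFT_eq_sum,
    EF_eq_boundary_terms hn, psiF]
  field_simp
  ring

/-- The discrete Fourier transform of the discrete derivative:
`(Dg)^_n(l) = ψ_n(l) · ĝ_n(l) - E_n(l)` for `-n² ≤ l ≤ n²-1`. -/
theorem discFT_deriv (n : ℕ) (hn : 0 < n) (g : ℤ → ℂ) (l : ℤ)
    (hl1 : -(n : ℤ) ^ 2 ≤ l) (hl2 : l ≤ (n : ℤ) ^ 2 - 1) :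
    discFT n (discDeriv n g) l = psiF n l * discFT n g l - EF n g l :=
  discFT_deriv_general n hn g l
end

section
/- Discrete Fourier transform formula: Let n be a positive integer and g : ℤ → ℂ. Then for every integer l with -n² ≤ l ≤ n²-1 and l ≠ 0, ψ_n(l) ≠ 0 and ĝ_n(l) = ((Dg)^_n(l) + E_n(l)) / ψ_n(l) = ((D(Dg))^_n(l) + F_n(l)) / ψ_n(l)², where (Dg)^_n and (D(Dg))^_n denote the discrete Fourier transforms of the first and second discrete derivatives of g. -/
open Complex Finset

/-! Writing `ω = e^{-π i l/n²}`, the transform `ĝ_n(l)` is `(1/n) ∑ g(j) ω^j`. Summation by parts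
moves the difference quotient from `g` onto the weights, where it becomes multiplication by
`n (ω⁻¹ - 1) = ψ_n(l)`; the boundary terms of the summation are `E_n(l)`. Applying this to `Dg`
as well gives the second formula, since `F_n = ψ_n E_n[g] + E_n[Dg]`. Finally `e^{π i l/n²}` is
the `l`-th power of a primitive `2n²`-th root of unity, so `ψ_n(l) ≠ 0` when `0 < |l| < 2n²`. -/

theorem Int.sum_Ico_sub {M : Type*} [AddCommGroup M] (f : ℤ → M) {a b : ℤ} (hab : a ≤ b) :
    ∑ i ∈ Ico a b, (f (i + 1) - f i) = f b - f a := by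
  induction b, hab using Int.leInduction with
  | base => simp
  | succ b hab ih =>
    rw [← insert_Ico_right_eq_Ico_add_one hab, sum_insert right_notMem_Ico, ih]
    abel

theorem sum_Ico_sub_mul_zpow {K : Type*} [Field K] (g : ℤ → K) {ω : K} (hω : ω ≠ 0)
    {a b : ℤ} (hab : a ≤ b) :
    ∑ j ∈ Ico a b, (g (j + 1) - g j) * ω ^ j =
      (ω⁻¹ - 1) * ∑ j ∈ Ico a b, g j * ω ^ j + ω⁻¹ * (g b * ω ^ b - g a * ω ^ a) := by
  have hterm : ∀ j : ℤ, (g (j + 1) - g j) * ω ^ j =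
      ω⁻¹ * (g (j + 1) * ω ^ (j + 1) - g j * ω ^ j) + (ω⁻¹ - 1) * (g j * ω ^ j) := by
    intro j
    rw [zpow_add_one₀ hω]
    field_simp
    ring
  simp_rw [hterm, sum_add_distrib, ← mul_sum, Int.sum_Ico_sub (fun j => g j * ω ^ j) hab]
  ring

theorem Complex.exp_pi_mul_I_mul_int_div_eq_one_iff {N : ℕ} (hN : N ≠ 0) (l : ℤ) :
    exp (Real.pi * I * l / N) = 1 ↔ (2 * N : ℤ) ∣ l := by
  have hζ := isPrimitiveRoot_exp (2 * N) (by positivity)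
  have hpow : exp (2 * Real.pi * I / (2 * N : ℕ)) ^ l = exp (Real.pi * I * l / N) := by
    rw [← exp_int_mul]
    congr 1
    push_cast
    field_simp
  rw [← hpow, hζ.zpow_eq_one_iff_dvd]
  norm_cast

theorem psiF_ne_zero {n : ℕ} (hn : n ≠ 0) {l : ℤ} (hl0 : l ≠ 0) (hl : |l| < 2 * n ^ 2) :
    psiF n l ≠ 0 := by
  have hroot : exp ((Real.pi : ℂ) * I * l / (n : ℂ) ^ 2) ≠ 1 := by
    have := exp_pi_mul_I_mul_int_div_eq_one_iff (N := n ^ 2) (by positivity) l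
    push_cast at this
    rw [Ne, this]
    exact fun hdvd => hl0 (Int.eq_zero_of_abs_lt_dvd hdvd hl)
  exact mul_ne_zero (Nat.cast_ne_zero.2 hn) (sub_ne_zero.2 hroot)

noncomputable def discFTRoot (n : ℕ) (l : ℤ) : ℂ :=
  exp (-((Real.pi : ℂ) * I * (l : ℂ)) / (n : ℂ) ^ 2)

section discFTRoot

variable (n : ℕ) (l : ℤ)

theorem discFTRoot_ne_zero : discFTRoot n l ≠ 0 := exp_ne_zero _

theorem discFTRoot_zpow (j : ℤ) :
    discFTRoot n l ^ j = exp (-((Real.pi : ℂ) * I * (j : ℂ) * (l : ℂ)) / (n : ℂ) ^ 2) := by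
  rw [discFTRoot, ← exp_int_mul]
  ring_nf

theorem discFT_eq_sum_zpow (g : ℤ → ℂ) :
    discFT n g l = 1 / (n : ℂ) *
      ∑ j ∈ Icc (-(n : ℤ) ^ 2) ((n : ℤ) ^ 2 - 1), g j * discFTRoot n l ^ j := by
  simp only [discFT, discFTRoot_zpow]

theorem phiF_eq : phiF n l = n * (discFTRoot n l - 1) := rfl

theorem discFTRoot_inv :
    (discFTRoot n l)⁻¹ = exp ((Real.pi : ℂ) * I * (l : ℂ) / (n : ℂ) ^ 2) := by
  rw [discFTRoot, ← exp_neg, neg_div, neg_neg]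

theorem psiF_eq : psiF n l = n * ((discFTRoot n l)⁻¹ - 1) := by
  rw [psiF, discFTRoot_inv]

theorem EF_eq (hn : n ≠ 0) (g : ℤ → ℂ) :
    EF n g l = (discFTRoot n l)⁻¹ * g (-(n : ℤ) ^ 2) * discFTRoot n l ^ (-(n : ℤ) ^ 2) -
      g ((n : ℤ) ^ 2 - 1) * discFTRoot n l ^ ((n : ℤ) ^ 2 - 1) := by
  have hbot : exp ((Real.pi : ℂ) * I * (l : ℂ)) = discFTRoot n l ^ (-(n : ℤ) ^ 2) := by
    rw [discFTRoot_zpow]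
    push_cast
    field_simp
  have htop : exp (-((Real.pi : ℂ) * I * ((n : ℂ) ^ 2 - 1) * (l : ℂ)) / (n : ℂ) ^ 2) =
      discFTRoot n l ^ ((n : ℤ) ^ 2 - 1) := by
    rw [discFTRoot_zpow]
    push_cast
    rfl
  have hω := discFTRoot_ne_zero n l
  rw [EF, phiF_eq, DF, CF, ← discFTRoot_inv, hbot, htop]
  field_simp
  ring

theorem psiF_mul_discFT (hn : n ≠ 0) (g : ℤ → ℂ) :
    psiF n l * discFT n g l = discFT n (discDeriv n g) l + EF n g l := by
  set ω := discFTRoot n l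
  set N : ℤ := (n : ℤ) ^ 2
  have hN : -N ≤ N - 1 := by
    have : 0 < N := by positivity
    omega
  have hsplit : ∀ f : ℤ → ℂ, ∑ j ∈ Icc (-N) (N - 1), f j * ω ^ j =
      ∑ j ∈ Ico (-N) (N - 1), f j * ω ^ j + f (N - 1) * ω ^ (N - 1) := fun f => by
    rw [← Ico_insert_right hN, sum_insert right_notMem_Ico, add_comm]
  have hderiv : ∑ j ∈ Ico (-N) (N - 1), discDeriv n g j * ω ^ j =
      n * ∑ j ∈ Ico (-N) (N - 1), (g (j + 1) - g j) * ω ^ j := by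
    rw [mul_sum]
    refine sum_congr rfl fun j hj => ?_
    rw [discDeriv, if_neg (mem_Ico.1 hj).2.ne]
    ring
  have hderiv_top : discDeriv n g (N - 1) = 0 := if_pos rfl
  rw [discFT_eq_sum_zpow, discFT_eq_sum_zpow, hsplit, hsplit, hderiv, hderiv_top,
    sum_Ico_sub_mul_zpow g (discFTRoot_ne_zero n l) hN, psiF_eq, EF_eq n l hn]
  field_simp
  ring

end discFTRoot

theorem CF_discDeriv (n : ℕ) (g : ℤ → ℂ) (l : ℤ) : CF n (discDeriv n g) l = CF' n g l := by
  have htop : discDeriv n g ((n : ℤ) ^ 2 - 1) = 0 := if_pos rfl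
  rw [CF, CF', htop]
  ring

theorem FF_eq (n : ℕ) (g : ℤ → ℂ) (l : ℤ) :
    FF n g l = psiF n l * EF n g l + EF n (discDeriv n g) l := by
  rw [FF, EF, EF, CF_discDeriv]
  unfold DF DF'
  ring

/-- **Discrete Fourier transform formula.** For `-n² ≤ l ≤ n²-1`, `l ≠ 0`, we have
`ψ_n(l) ≠ 0` and
`ĝ_n(l) = ((Dg)^_n(l) + E_n(l)) / ψ_n(l) = ((D(Dg))^_n(l) + F_n(l)) / ψ_n(l)²`. -/
theorem discFT_formula (n : ℕ) (hn : 0 < n) (g : ℤ → ℂ) (l : ℤ)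
    (hl1 : -(n : ℤ) ^ 2 ≤ l) (hl2 : l ≤ (n : ℤ) ^ 2 - 1) (hl0 : l ≠ 0) :
    psiF n l ≠ 0 ∧
      discFT n g l = (discFT n (discDeriv n g) l + EF n g l) / psiF n l ∧
      discFT n g l = (discFT n (discDeriv n (discDeriv n g)) l + FF n g l) / psiF n l ^ 2 := by
  have hl : |l| < 2 * n ^ 2 := abs_lt.2 ⟨by linarith, by linarith⟩
  have hψ := psiF_ne_zero hn.ne' hl0 hl
  have h1 := psiF_mul_discFT n l hn.ne' g
  have h2 := psiF_mul_discFT n l hn.ne' (discDeriv n g)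
  refine ⟨hψ, ?_, ?_⟩
  · rw [eq_div_iff hψ]
    linear_combination h1
  · rw [eq_div_iff (pow_ne_zero 2 hψ), FF_eq]
    linear_combination psiF n l * h1 + h2
end

section
/- Let D₁ ≥ 0 and let g : ℝ → ℂ satisfy |g(x)| ≤ D₁/|x| for all x ≠ 0. For each positive integer n let g_n : ℤ → ℂ be g_n(j) = g(j/n), and form F_n from g_n. Then for all integers n ≥ 2 and all integers l, |F_n(l)| ≤ 16·D₁. -/
open Complex Finset

/-!
Every exponential in `F_n(l)` has modulus one and `|ψ_n|, |φ_n| ≤ 2n`, so the triangle inequality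
bounds `|F_n(l)|` by `n` times a combination of the three boundary samples `g_n(n²-1)`, `g_n(-n²)`,
`g_n(1-n²)`, i.e. of `g` at `±n` and `±(n² - 1)/n`. There the decay of `g` gives `D₁/n` and
`D₁ n/(n² - 1)`, and the total `D₁ (9 + 5n²/(n² - 1)) ≤ 47 D₁/3` for `n ≥ 2`.
-/

lemma norm_exp_of_re_eq_zero {z : ℂ} (hz : z.re = 0) : ‖exp z‖ = 1 := by
  rw [norm_exp, hz, Real.exp_zero]

section Bounds

variable (n : ℕ) (g : ℤ → ℂ) (l : ℤ)

lemma norm_exp_pi_I_mul_div_sq :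
    ‖exp ((Real.pi : ℂ) * I * (l : ℂ) / (n : ℂ) ^ 2)‖ = 1 :=
  norm_exp_of_re_eq_zero (by simp [div_re, pow_two])

lemma norm_exp_neg_pi_I_mul_div_sq :
    ‖exp (-((Real.pi : ℂ) * I * (l : ℂ)) / (n : ℂ) ^ 2)‖ = 1 :=
  norm_exp_of_re_eq_zero (by simp [div_re, pow_two])

lemma norm_exp_neg_pi_I_mul_sq_sub_one_div_sq :
    ‖exp (-((Real.pi : ℂ) * I * ((n : ℂ) ^ 2 - 1) * (l : ℂ)) / (n : ℂ) ^ 2)‖ = 1 :=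
  norm_exp_of_re_eq_zero (by simp [div_re, pow_two])

lemma norm_exp_pi_I_mul : ‖exp ((Real.pi : ℂ) * I * (l : ℂ))‖ = 1 :=
  norm_exp_of_re_eq_zero (by simp)

lemma norm_psiF_le : ‖psiF n l‖ ≤ 2 * n := by
  calc ‖psiF n l‖ ≤ n * (‖exp ((Real.pi : ℂ) * I * (l : ℂ) / (n : ℂ) ^ 2)‖ + ‖(1 : ℂ)‖) := by
        rw [psiF, norm_mul, norm_natCast]; gcongr; exact norm_sub_le _ _
    _ = 2 * n := by rw [norm_exp_pi_I_mul_div_sq, norm_one]; ring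

lemma norm_phiF_le : ‖phiF n l‖ ≤ 2 * n := by
  calc ‖phiF n l‖ ≤ n * (‖exp (-((Real.pi : ℂ) * I * (l : ℂ)) / (n : ℂ) ^ 2)‖ + ‖(1 : ℂ)‖) := by
        rw [phiF, norm_mul, norm_natCast]; gcongr; exact norm_sub_le _ _
    _ = 2 * n := by rw [norm_exp_neg_pi_I_mul_div_sq, norm_one]; ring

lemma norm_DF_eq : ‖DF n g l‖ = ‖g (-(n : ℤ) ^ 2)‖ / n := by
  rw [DF, norm_mul, norm_mul, norm_mul, norm_exp_pi_I_mul_div_sq, norm_exp_pi_I_mul, norm_neg,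
    norm_div, norm_one, norm_natCast]
  ring

lemma norm_CF_le : ‖CF n g l‖ ≤ ‖g ((n : ℤ) ^ 2 - 1)‖ + ‖g (-(n : ℤ) ^ 2)‖ := by
  refine (norm_sub_le _ _).trans_eq ?_
  rw [norm_mul, norm_mul, norm_exp_neg_pi_I_mul_sq_sub_one_div_sq, norm_exp_pi_I_mul, mul_one,
    mul_one]

lemma norm_discDeriv_neg_sq_le :
    ‖discDeriv n g (-(n : ℤ) ^ 2)‖ ≤ n * (‖g (-(n : ℤ) ^ 2 + 1)‖ + ‖g (-(n : ℤ) ^ 2)‖) := by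
  have hlast : -(n : ℤ) ^ 2 ≠ (n : ℤ) ^ 2 - 1 := by omega
  rw [discDeriv, if_neg hlast, norm_mul, norm_natCast]
  gcongr
  exact norm_sub_le _ _

lemma norm_CF'_eq : ‖CF' n g l‖ = ‖discDeriv n g (-(n : ℤ) ^ 2)‖ := by
  rw [CF', norm_mul, norm_neg, norm_exp_pi_I_mul, mul_one]

lemma norm_DF'_eq : ‖DF' n g l‖ = ‖discDeriv n g (-(n : ℤ) ^ 2)‖ / n := by
  rw [DF', norm_mul, norm_mul, norm_mul, norm_exp_pi_I_mul_div_sq, norm_exp_pi_I_mul, norm_neg,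
    norm_div, norm_one, norm_natCast]
  ring

lemma norm_FF_le :
    ‖FF n g l‖ ≤ n * (2 * ‖g ((n : ℤ) ^ 2 - 1)‖ + 9 * ‖g (-(n : ℤ) ^ 2)‖
      + 3 * ‖g (-(n : ℤ) ^ 2 + 1)‖) := by
  set a := ‖g ((n : ℤ) ^ 2 - 1)‖
  set b := ‖g (-(n : ℤ) ^ 2)‖
  set c := ‖g (-(n : ℤ) ^ 2 + 1)‖
  have hψφD : ‖psiF n l * phiF n l * DF n g l‖ ≤ 2 * n * (2 * n) * (b / n) := by
    rw [norm_mul, norm_mul, norm_DF_eq]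
    gcongr
    exacts [norm_psiF_le n l, norm_phiF_le n l]
  have hψC : ‖psiF n l * CF n g l‖ ≤ 2 * n * (a + b) := by
    rw [norm_mul]
    gcongr
    exacts [norm_psiF_le n l, norm_CF_le n g l]
  have hφD' : ‖phiF n l * DF' n g l‖ ≤ 2 * n * (n * (c + b) / n) := by
    rw [norm_mul, norm_DF'_eq]
    gcongr
    exacts [norm_phiF_le n l, norm_discDeriv_neg_sq_le n g]
  have hC' : ‖CF' n g l‖ ≤ n * (c + b) :=
    (norm_CF'_eq n g l).trans_le (norm_discDeriv_neg_sq_le n g)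
  have hsplit : ‖FF n g l‖ ≤ ‖psiF n l * phiF n l * DF n g l‖ + ‖psiF n l * CF n g l‖
      + ‖phiF n l * DF' n g l‖ + ‖CF' n g l‖ :=
    (norm_sub_le _ _).trans <| by
      gcongr
      exact (norm_add_le _ _).trans (by gcongr; exact norm_sub_le _ _)
  rcases n.eq_zero_or_pos with rfl | hn
  · simp only [Nat.cast_zero, zero_mul, mul_zero, div_zero] at *
    linarith
  · have hn' : (n : ℝ) ≠ 0 := by positivity
    calc ‖FF n g l‖ ≤ 2 * n * (2 * n) * (b / n) + 2 * n * (a + b) + 2 * n * (n * (c + b) / n)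
          + n * (c + b) := by linarith
      _ = n * (2 * a + 9 * b + 3 * c) := by field_simp; ring

end Bounds

lemma norm_comp_div_natCast_le {D₁ : ℝ} {g : ℝ → ℂ} (hg : ∀ x : ℝ, x ≠ 0 → ‖g x‖ ≤ D₁ / |x|)
    {n : ℕ} (hn : 0 < n) {x : ℝ} (hx : x ≠ 0) : ‖g (x / n)‖ ≤ D₁ * n / |x| := by
  have hn' : (0 : ℝ) < n := Nat.cast_pos.mpr hn
  calc ‖g (x / n)‖ ≤ D₁ / |x / n| := hg _ (div_ne_zero hx hn'.ne')
    _ = D₁ * n / |x| := by rw [abs_div, abs_of_pos hn', div_div_eq_mul_div]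

lemma norm_FF_comp_div_natCast_le {D₁ : ℝ} {g : ℝ → ℂ}
    (hg : ∀ x : ℝ, x ≠ 0 → ‖g x‖ ≤ D₁ / |x|) {n : ℕ} (hn : 2 ≤ n) (l : ℤ) :
    ‖FF n (fun j : ℤ => g ((j : ℝ) / (n : ℝ))) l‖
      ≤ D₁ * (9 + 5 * ((n : ℝ) ^ 2 / ((n : ℝ) ^ 2 - 1))) := by
  have hN : (2 : ℝ) ≤ n := by exact_mod_cast hn
  have hN1 : (0 : ℝ) < (n : ℝ) ^ 2 - 1 := by nlinarith
  have hN2 : (0 : ℝ) < (n : ℝ) ^ 2 := by positivity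
  have hsample : ∀ x : ℝ, x ≠ 0 → ‖g (x / n)‖ ≤ D₁ * n / |x| :=
    fun _ hx => norm_comp_div_natCast_le hg (by omega) hx
  have ha : ‖g ((((n : ℤ) ^ 2 - 1 : ℤ) : ℝ) / n)‖ ≤ D₁ * n / ((n : ℝ) ^ 2 - 1) := by
    push_cast
    simpa only [abs_of_pos hN1] using hsample _ hN1.ne'
  have hb : ‖g (((-(n : ℤ) ^ 2 : ℤ) : ℝ) / n)‖ ≤ D₁ * n / (n : ℝ) ^ 2 := by
    push_cast
    simpa only [abs_neg, abs_of_pos hN2] using hsample _ (neg_ne_zero.mpr hN2.ne')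
  have hc : ‖g (((-(n : ℤ) ^ 2 + 1 : ℤ) : ℝ) / n)‖ ≤ D₁ * n / ((n : ℝ) ^ 2 - 1) := by
    push_cast
    rw [show -(n : ℝ) ^ 2 + 1 = -((n : ℝ) ^ 2 - 1) by ring]
    simpa only [abs_neg, abs_of_pos hN1] using hsample _ (neg_ne_zero.mpr hN1.ne')
  calc _ ≤ _ := norm_FF_le n _ l
    _ ≤ n * (2 * (D₁ * n / ((n : ℝ) ^ 2 - 1)) + 9 * (D₁ * n / (n : ℝ) ^ 2)
          + 3 * (D₁ * n / ((n : ℝ) ^ 2 - 1))) := by gcongr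
    _ = D₁ * (9 + 5 * ((n : ℝ) ^ 2 / ((n : ℝ) ^ 2 - 1))) := by field_simp; ring

lemma sq_div_sq_sub_one_le {x : ℝ} (hx : 2 ≤ x) : x ^ 2 / (x ^ 2 - 1) ≤ 4 / 3 := by
  rw [div_le_iff₀ (by nlinarith)]
  nlinarith

/-- If `|g(x)| ≤ D₁/|x|` for all `x ≠ 0` and `g_n(j) = g(j/n)`, then `|F_n(l)| ≤ 16·D₁`
for all `n ≥ 2` and all integers `l`. -/
theorem FF_bound (D₁ : ℝ) (hD₁ : 0 ≤ D₁) (g : ℝ → ℂ)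
    (hg : ∀ x : ℝ, x ≠ 0 → ‖g x‖ ≤ D₁ / |x|) :
    ∀ n : ℕ, 2 ≤ n → ∀ l : ℤ,
      ‖FF n (fun j : ℤ => g ((j : ℝ) / (n : ℝ))) l‖ ≤ 16 * D₁ := by
  intro n hn l
  have hratio := sq_div_sq_sub_one_le (x := n) (by exact_mod_cast hn)
  calc _ ≤ D₁ * (9 + 5 * ((n : ℝ) ^ 2 / ((n : ℝ) ^ 2 - 1))) :=
        norm_FF_comp_div_natCast_le hg hn l
    _ ≤ D₁ * (9 + 5 * (4 / 3)) := by gcongr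
    _ ≤ 16 * D₁ := by linarith
end

section
/- Let g : ℝ → ℝ be twice continuously differentiable with g' bounded and g'' Lebesgue integrable on ℝ. For each positive integer n let g_n : ℤ → ℂ be g_n(j) = g(j/n). Then for all positive integers n and all integers l with -n² ≤ l ≤ n²-1, |(D(D g_n))^_n(l)| ≤ ∫_ℝ |g''(x)| dx + sup_{x ∈ ℝ} |g'(x)|. -/
open Complex Finset MeasureTheory

/-! By the mean value theorem `D g_n (j) = g'(ξ_j)` for an increasing sequence
`ξ_j ∈ (j/n, (j+1)/n)`, except at the last grid point, where `D g_n` vanishes. Bounding the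
Fourier transform by the `ℓ¹` norm, the factor `1/n` cancels the `n` of the second difference, so
it remains to bound the variation `∑ |D g_n (j+1) - D g_n (j)|`: the interior terms
`|g'(ξ_{j+1}) - g'(ξ_j)| ≤ ∫_{ξ_j}^{ξ_{j+1}} |g''|` add up to at most `∫ |g''|`, and the one
boundary term `|D g_n (n²-2)|` is at most `sup |g'|`. -/

noncomputable def gridSample (n : ℕ) (g : ℝ → ℝ) : ℤ → ℂ :=
  fun j => ((g ((j : ℝ) / (n : ℝ)) : ℝ) : ℂ)

theorem norm_discFT_le (n : ℕ) (f : ℤ → ℂ) (l : ℤ) :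
    ‖discFT n f l‖ ≤ (n : ℝ)⁻¹ * ∑ j ∈ Icc (-(n : ℤ) ^ 2) ((n : ℤ) ^ 2 - 1), ‖f j‖ := by
  have hexp : ∀ j : ℤ,
      ‖Complex.exp (-((Real.pi : ℂ) * Complex.I * (j : ℂ) * (l : ℂ)) / (n : ℂ) ^ 2)‖ = 1 := by
    intro j
    rw [show -((Real.pi : ℂ) * Complex.I * (j : ℂ) * (l : ℂ)) / (n : ℂ) ^ 2
        = ((-(Real.pi * j * l) / (n : ℝ) ^ 2 : ℝ) : ℂ) * Complex.I by push_cast; ring]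
    exact Complex.norm_exp_ofReal_mul_I _
  rw [discFT, norm_mul, one_div, norm_inv, Complex.norm_natCast]
  gcongr
  refine (norm_sum_le _ _).trans_eq (Finset.sum_congr rfl fun j _ => ?_)
  rw [norm_mul, hexp, mul_one]

section discDeriv

variable (n : ℕ) (h : ℤ → ℂ)

theorem discDeriv_top : discDeriv n h ((n : ℤ) ^ 2 - 1) = 0 := if_pos rfl

theorem discDeriv_of_ne {j : ℤ} (hj : j ≠ (n : ℤ) ^ 2 - 1) :
    discDeriv n h j = n * (h (j + 1) - h j) := if_neg hj

theorem sum_norm_discDeriv (hn : 0 < n) :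
    ∑ j ∈ Icc (-(n : ℤ) ^ 2) ((n : ℤ) ^ 2 - 1), ‖discDeriv n h j‖ =
      n * ∑ j ∈ Ico (-(n : ℤ) ^ 2) ((n : ℤ) ^ 2 - 1), ‖h (j + 1) - h j‖ := by
  have hle : -(n : ℤ) ^ 2 ≤ (n : ℤ) ^ 2 - 1 := by nlinarith
  rw [← Ico_insert_right hle, sum_insert right_notMem_Ico, discDeriv_top, norm_zero, zero_add,
    mul_sum]
  refine Finset.sum_congr rfl fun j hj => ?_
  rw [discDeriv_of_ne n h (mem_Ico.1 hj).2.ne, norm_mul, Complex.norm_natCast]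

end discDeriv

theorem abs_sub_le_intervalIntegral_abs_deriv {f : ℝ → ℝ} (hf : Differentiable ℝ f) {x y : ℝ}
    (hf' : IntervalIntegrable (deriv f) volume x y) (hxy : x ≤ y) :
    |f y - f x| ≤ ∫ t in x..y, |deriv f t| := by
  rw [← intervalIntegral.integral_deriv_eq_sub (fun t _ => hf t) hf']
  exact intervalIntegral.abs_integral_le_integral_abs hxy

theorem sum_intervalIntegral_adjacent {f : ℝ → ℝ} (hf : Integrable f) (ξ : ℤ → ℝ) {a b : ℤ}
    (hab : a ≤ b) : ∑ j ∈ Ico a b, ∫ t in ξ j..ξ (j + 1), f t = ∫ t in ξ a..ξ b, f t := by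
  induction b, hab using Int.leInduction with
  | base => simp
  | succ b hab ih =>
    rw [Ico_add_one_right_eq_Icc, ← Ico_insert_right hab, sum_insert right_notMem_Ico, ih,
      add_comm, intervalIntegral.integral_add_adjacent_intervals hf.intervalIntegrable
        hf.intervalIntegrable]

theorem sum_intervalIntegral_le_integral {f : ℝ → ℝ} (hf : Integrable f) (hf0 : 0 ≤ f)
    {ξ : ℤ → ℝ} (hξ : Monotone ξ) {a b : ℤ} (hab : a ≤ b) :
    ∑ j ∈ Ico a b, ∫ t in ξ j..ξ (j + 1), f t ≤ ∫ t, f t := by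
  rw [sum_intervalIntegral_adjacent hf ξ hab, intervalIntegral.integral_of_le (hξ hab)]
  exact setIntegral_le_integral hf (Filter.Eventually.of_forall hf0)

theorem exists_strictMono_deriv_eq_slope {g : ℝ → ℝ} (hg : Differentiable ℝ g) {c : ℝ}
    (hc : 0 < c) :
    ∃ ξ : ℤ → ℝ, StrictMono ξ ∧
      ∀ j : ℤ, deriv g (ξ j) = c * (g (((j + 1 : ℤ) : ℝ) / c) - g ((j : ℝ) / c)) := by
  have hmvt : ∀ j : ℤ, ∃ x ∈ Set.Ioo ((j : ℝ) / c) (((j + 1 : ℤ) : ℝ) / c),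
      deriv g x = (g (((j + 1 : ℤ) : ℝ) / c) - g ((j : ℝ) / c)) /
        (((j + 1 : ℤ) : ℝ) / c - (j : ℝ) / c) := fun j =>
    exists_deriv_eq_slope g (by gcongr; simp) hg.continuous.continuousOn hg.differentiableOn
  choose ξ hξ hslope using hmvt
  refine ⟨ξ, strictMono_int_of_lt_succ fun j => (hξ j).2.trans (hξ (j + 1)).1, fun j => ?_⟩
  rw [hslope, show ((j + 1 : ℤ) : ℝ) / c - (j : ℝ) / c = c⁻¹ by push_cast; field_simp; ring,
    div_inv_eq_mul, mul_comm]

theorem exists_strictMono_discDeriv_gridSample_eq {g : ℝ → ℝ} (hg : Differentiable ℝ g)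
    {n : ℕ} (hn : 0 < n) :
    ∃ ξ : ℤ → ℝ, StrictMono ξ ∧
      ∀ j ≠ (n : ℤ) ^ 2 - 1, discDeriv n (gridSample n g) j = ((deriv g (ξ j) : ℝ) : ℂ) := by
  obtain ⟨ξ, hξ, hslope⟩ := exists_strictMono_deriv_eq_slope hg (c := n) (by positivity)
  refine ⟨ξ, hξ, fun j hj => ?_⟩
  rw [discDeriv_of_ne n _ hj, hslope, gridSample]
  push_cast
  rfl

theorem sum_norm_sub_discDeriv_gridSample_le {g : ℝ → ℝ} (hg : ContDiff ℝ 2 g)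
    (hi : Integrable (deriv (deriv g))) {M : ℝ} (hM : ∀ x, |deriv g x| ≤ M) {n : ℕ}
    (hn : 0 < n) :
    ∑ j ∈ Ico (-(n : ℤ) ^ 2) ((n : ℤ) ^ 2 - 1),
        ‖discDeriv n (gridSample n g) (j + 1) - discDeriv n (gridSample n g) j‖ ≤
      (∫ x, |deriv (deriv g) x|) + M := by
  have hg' : Differentiable ℝ (deriv g) :=
    ((contDiff_succ_iff_deriv (n := 1)).1 hg).2.2.differentiable one_ne_zero
  obtain ⟨ξ, hξ, hDg⟩ := exists_strictMono_discDeriv_gridSample_eq (hg.differentiable two_ne_zero) hn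
  set N : ℤ := (n : ℤ) ^ 2
  have hle : -N ≤ N - 2 := by nlinarith
  have hstep : ∀ j ∈ Ico (-N) (N - 2),
      ‖discDeriv n (gridSample n g) (j + 1) - discDeriv n (gridSample n g) j‖ ≤
        ∫ t in ξ j..ξ (j + 1), |deriv (deriv g) t| := by
    intro j hj
    have hj := (mem_Ico.1 hj).2
    rw [hDg j (by omega), hDg (j + 1) (by omega), ← ofReal_sub, norm_real, Real.norm_eq_abs]
    exact abs_sub_le_intervalIntegral_abs_deriv hg' hi.intervalIntegrable (hξ (lt_add_one j)).le
  have hlast : ‖discDeriv n (gridSample n g) (N - 2 + 1) - discDeriv n (gridSample n g) (N - 2)‖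
      ≤ M := by
    rw [show N - 2 + 1 = N - 1 by ring, discDeriv_top, zero_sub, norm_neg, hDg _ (by omega),
      norm_real, Real.norm_eq_abs]
    exact hM _
  rw [show N - 1 = N - 2 + 1 by ring, Ico_add_one_right_eq_Icc, ← Ico_insert_right hle,
    sum_insert right_notMem_Ico, add_comm]
  exact add_le_add ((sum_le_sum hstep).trans
    (sum_intervalIntegral_le_integral hi.abs (fun _ => abs_nonneg _) hξ.monotone hle)) hlast

/-- If `g : ℝ → ℝ` is twice continuously differentiable with `g'` bounded and `g''`
Lebesgue integrable, then for all `n > 0` and `-n² ≤ l ≤ n²-1`,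
`|(D(D g_n))^_n(l)| ≤ ∫ |g''| + sup |g'|`, where `g_n(j) = g(j/n)`. -/
theorem discFT_second_deriv_bound (g : ℝ → ℝ) (hg : ContDiff ℝ 2 g)
    (hb : ∃ B : ℝ, ∀ x : ℝ, |deriv g x| ≤ B)
    (hi : Integrable (fun x => deriv (deriv g) x)) :
    ∀ n : ℕ, 0 < n → ∀ l : ℤ, -(n : ℤ) ^ 2 ≤ l → l ≤ (n : ℤ) ^ 2 - 1 →
      ‖discFT n
          (discDeriv n (discDeriv n (fun j : ℤ => ((g ((j : ℝ) / (n : ℝ)) : ℝ) : ℂ)))) l‖ ≤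
        (∫ x : ℝ, |deriv (deriv g) x|) + ⨆ x : ℝ, |deriv g x| := by
  intro n hn l _ _
  obtain ⟨B, hB⟩ := hb
  have hM : ∀ x, |deriv g x| ≤ ⨆ x, |deriv g x| := le_ciSup ⟨B, Set.forall_mem_range.2 hB⟩
  calc _ ≤ (n : ℝ)⁻¹ * ∑ j ∈ Icc (-(n : ℤ) ^ 2) ((n : ℤ) ^ 2 - 1),
          ‖discDeriv n (discDeriv n (gridSample n g)) j‖ := norm_discFT_le n _ l
    _ = ∑ j ∈ Ico (-(n : ℤ) ^ 2) ((n : ℤ) ^ 2 - 1),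
          ‖discDeriv n (gridSample n g) (j + 1) - discDeriv n (gridSample n g) j‖ := by
      rw [sum_norm_discDeriv n _ hn, inv_mul_cancel_left₀ (by positivity)]
    _ ≤ _ := sum_norm_sub_discDeriv_gridSample_le hg hi hM hn
end

section
/- Let g : ℝ → ℂ be a Schwartz function, and for each positive integer n define the step function g_{n,ext} : ℝ → ℂ by g_{n,ext}(x) = g(⌊n x⌋ / n), where ⌊·⌋ is the integer floor. Then each g_{n,ext} is Lebesgue integrable on ℝ, and lim_{n→∞} ∫_ℝ |g(x) - g_{n,ext}(x)| dx = 0. -/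
/-!
Rounding down to the grid `n⁻¹ ℤ` moves a point by less than `1 / n ≤ 1`, and a shift by at most
one changes `1 + x ^ 2` by at most a factor of three. Hence the inverse-square decay of a Schwartz
function gives the step functions a common integrable majorant `x ↦ C (1 + x ^ 2)⁻¹`, and the
limit follows from pointwise convergence `⌊n x⌋ / n → x`, continuity and dominated convergence.
-/

open MeasureTheory Filter Topology

lemma abs_sub_floor_mul_div_le_inv {c : ℝ} (hc : 0 < c) (x : ℝ) :
    |x - ⌊c * x⌋ / c| ≤ c⁻¹ := by
  have hfract : x - ⌊c * x⌋ / c = Int.fract (c * x) / c := by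
    rw [← Int.self_sub_floor]
    field_simp
  rw [hfract, abs_div, abs_of_pos hc, abs_of_nonneg (Int.fract_nonneg _), div_eq_mul_inv]
  exact mul_le_of_le_one_left (inv_nonneg.2 hc.le) (Int.fract_lt_one _).le

lemma measurable_floor_mul_div (c : ℝ) : Measurable fun x : ℝ => (⌊c * x⌋ : ℝ) / c :=
  (measurable_from_top.comp (measurable_const_mul c).floor).div_const c

lemma tendsto_floor_natCast_mul_div (x : ℝ) :
    Tendsto (fun n : ℕ => (⌊(n : ℝ) * x⌋ : ℝ) / n) atTop (𝓝 x) := by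
  rw [tendsto_iff_norm_sub_tendsto_zero]
  refine squeeze_zero_norm' ?_ tendsto_inv_atTop_nhds_zero_nat
  filter_upwards [eventually_gt_atTop 0] with n hn
  rw [norm_norm, Real.norm_eq_abs, abs_sub_comm]
  exact abs_sub_floor_mul_div_le_inv (Nat.cast_pos.2 hn) x

section InverseSquareDecay

variable {E : Type*} [NormedAddCommGroup E] {f : ℝ → E} {D : ℝ}

lemma one_add_sq_le_three_mul_one_add_sq {x y : ℝ} (h : |x - y| ≤ 1) :
    1 + x ^ 2 ≤ 3 * (1 + y ^ 2) := by
  obtain ⟨h₁, h₂⟩ := abs_le.1 h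
  nlinarith [sq_nonneg (x - 2 * y)]

lemma norm_le_three_mul_inv_one_add_sq (hD : 0 ≤ D) (hfD : ∀ y, ‖f y‖ ≤ D * (1 + y ^ 2)⁻¹)
    {x y : ℝ} (h : |x - y| ≤ 1) : ‖f y‖ ≤ 3 * D * (1 + x ^ 2)⁻¹ :=
  calc ‖f y‖ ≤ D * (1 + y ^ 2)⁻¹ := hfD y
    _ ≤ 3 * D * (1 + x ^ 2)⁻¹ := by
      rw [← div_eq_mul_inv, ← div_eq_mul_inv, div_le_div_iff₀ (by positivity) (by positivity)]
      nlinarith [one_add_sq_le_three_mul_one_add_sq h]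

lemma integrable_comp_of_abs_sub_le_one (hf : Continuous f) (hD : 0 ≤ D)
    (hfD : ∀ y, ‖f y‖ ≤ D * (1 + y ^ 2)⁻¹) {φ : ℝ → ℝ} (hφ : Measurable φ)
    (hφ_near : ∀ x, |x - φ x| ≤ 1) : Integrable fun x => f (φ x) :=
  (integrable_inv_one_add_sq.const_mul (3 * D)).mono'
    (hf.comp_aestronglyMeasurable hφ.aestronglyMeasurable)
    (ae_of_all _ fun x => norm_le_three_mul_inv_one_add_sq hD hfD (hφ_near x))

lemma tendsto_integral_norm_sub_comp (hf : Continuous f) (hD : 0 ≤ D)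
    (hfD : ∀ y, ‖f y‖ ≤ D * (1 + y ^ 2)⁻¹) {ι : Type*} {l : Filter ι} [l.IsCountablyGenerated]
    {φ : ι → ℝ → ℝ} (hφ : ∀ i, Measurable (φ i)) (hφ_near : ∀ᶠ i in l, ∀ x, |x - φ i x| ≤ 1)
    (hφ_lim : ∀ x, Tendsto (fun i => φ i x) l (𝓝 x)) :
    Tendsto (fun i => ∫ x, ‖f x - f (φ i x)‖) l (𝓝 0) := by
  have hbound : ∀ᶠ i in l, ∀ᵐ x, ‖‖f x - f (φ i x)‖‖ ≤ 4 * D * (1 + x ^ 2)⁻¹ := by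
    filter_upwards [hφ_near] with i hi
    refine ae_of_all _ fun x => ?_
    rw [norm_norm]
    linarith [norm_sub_le (f x) (f (φ i x)), hfD x, norm_le_three_mul_inv_one_add_sq hD hfD (hi x)]
  have hlim : ∀ x, Tendsto (fun i => ‖f x - f (φ i x)‖) l (𝓝 0) := fun x => by
    simpa using ((tendsto_const_nhds (x := f x)).sub ((hf.tendsto x).comp (hφ_lim x))).norm
  simpa using tendsto_integral_filter_of_dominated_convergence _
    (.of_forall fun i =>
      (hf.aestronglyMeasurable.sub (hf.comp_aestronglyMeasurable (hφ i).aestronglyMeasurable)).norm)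
    hbound (integrable_inv_one_add_sq.const_mul (4 * D)) (ae_of_all _ hlim)

end InverseSquareDecay

lemma SchwartzMap.exists_norm_le_mul_inv_one_add_sq {F : Type*} [NormedAddCommGroup F]
    [NormedSpace ℝ F] (g : SchwartzMap ℝ F) : ∃ D, 0 ≤ D ∧ ∀ x, ‖g x‖ ≤ D * (1 + x ^ 2)⁻¹ := by
  refine ⟨SchwartzMap.seminorm ℝ 0 0 g + SchwartzMap.seminorm ℝ 2 0 g,
    add_nonneg (apply_nonneg _ _) (apply_nonneg _ _), fun x => ?_⟩
  rw [← div_eq_mul_inv, le_div_iff₀ (by positivity)]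
  have h₀ := g.norm_le_seminorm ℝ x
  have h₂ := g.norm_pow_mul_le_seminorm ℝ 2 x
  rw [Real.norm_eq_abs, sq_abs] at h₂
  linarith

/-- For a Schwartz function `g`, the step functions `g_{n,ext}(x) = g(⌊n x⌋/n)` are
Lebesgue integrable, and `∫ |g - g_{n,ext}| → 0` as `n → ∞`. -/
theorem step_approx (g : SchwartzMap ℝ ℂ) :
    (∀ n : ℕ, 0 < n → Integrable (fun x : ℝ => g ((⌊(n : ℝ) * x⌋ : ℝ) / (n : ℝ)))) ∧
    Tendsto (fun n : ℕ =>
        ∫ x : ℝ, ‖g x - g ((⌊(n : ℝ) * x⌋ : ℝ) / (n : ℝ))‖)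
      atTop (nhds 0) := by
  obtain ⟨D, hD, hgD⟩ := g.exists_norm_le_mul_inv_one_add_sq
  have hnear : ∀ n : ℕ, 0 < n → ∀ x : ℝ, |x - ⌊(n : ℝ) * x⌋ / n| ≤ 1 := fun n hn x =>
    (abs_sub_floor_mul_div_le_inv (Nat.cast_pos.2 hn) x).trans
      (inv_le_one_of_one_le₀ (Nat.one_le_cast.2 hn))
  exact ⟨fun n hn => integrable_comp_of_abs_sub_le_one g.continuous hD hgD
      (measurable_floor_mul_div _) (hnear n hn),
    tendsto_integral_norm_sub_comp g.continuous hD hgD (fun _ => measurable_floor_mul_div _)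
      ((eventually_gt_atTop 0).mono hnear) tendsto_floor_natCast_mul_div⟩
end

section
/- Let C ≥ 0 and let g : ℝ → ℂ satisfy |g(x)| ≤ C/x² for all x ≠ 0. For positive integers n and N, define g_{n,ext} : ℝ → ℂ by g_{n,ext}(x) = g(⌊n x⌋ / n), where ⌊·⌋ is the integer floor. Then ∫_{|x| > N} |g_{n,ext}(x)| dx ≤ 3C/N. -/
/-!
With `φ(x) = ⌊n x⌋ / n` we have `x - 1/n < φ(x) ≤ x`. Split `{|x| > N}` into `x < -N`,
`N < x ≤ N + 1/n` and `x > N + 1/n`. On the first piece `|φ(x)| ≥ |x|`, so the integrand is at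
most `C / x²`; on the second `φ(x) ≥ N` because `n N` is an integer below `n x`, and the piece has
length `1/n`; on the third `φ(x) > x - 1/n > N`, so the integrand is at most `C / (x - 1/n)²`.
Each piece contributes at most `C / N`.
-/

open Set MeasureTheory

lemma lintegral_Ioi_div_sq {C b : ℝ} (hC : 0 ≤ C) (hb : 0 < b) :
    ∫⁻ x in Ioi b, ENNReal.ofReal (C / x ^ 2) = ENNReal.ofReal (C / b) := by
  have hpow : ∀ x ∈ Ioi b, C / x ^ 2 = C * x ^ (-2 : ℝ) := fun x hx => by
    rw [Real.rpow_neg (hb.trans hx).le, Real.rpow_two, div_eq_mul_inv]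
  rw [setLIntegral_congr_fun measurableSet_Ioi fun x hx => by rw [hpow x hx],
    ← ofReal_integral_eq_lintegral_ofReal
      ((integrableOn_Ioi_rpow_of_lt (by norm_num) hb).const_mul C),
    integral_const_mul, integral_Ioi_rpow_of_lt (by norm_num) hb]
  · norm_num [Real.rpow_neg_one, div_eq_mul_inv]
  · filter_upwards [self_mem_ae_restrict measurableSet_Ioi] with x hx
    have : 0 < x := hb.trans hx
    positivity

lemma measurable_ofReal_div_sq (C : ℝ) : Measurable fun x : ℝ => ENNReal.ofReal (C / x ^ 2) :=
  (measurable_const.div (measurable_id.pow_const 2)).ennreal_ofReal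

lemma lintegral_Iio_neg_div_sq {C b : ℝ} (hC : 0 ≤ C) (hb : 0 < b) :
    ∫⁻ x in Iio (-b), ENNReal.ofReal (C / x ^ 2) = ENNReal.ofReal (C / b) := by
  have hcomp := (Measure.measurePreserving_neg volume).setLIntegral_comp_preimage
    measurableSet_Ioi (measurable_ofReal_div_sq C) (s := Ioi b)
  simp only [neg_sq] at hcomp
  rw [← lintegral_Ioi_div_sq hC hb, ← hcomp, ← neg_Ioi]
  rfl

lemma lintegral_Ioi_add_div_sub_sq {C b : ℝ} (hC : 0 ≤ C) (hb : 0 < b) (c : ℝ) :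
    ∫⁻ x in Ioi (b + c), ENNReal.ofReal (C / (x - c) ^ 2) = ENNReal.ofReal (C / b) := by
  rw [← lintegral_Ioi_div_sq hC hb, ← preimage_sub_const_Ioi]
  exact (measurePreserving_sub_right volume c).setLIntegral_comp_preimage measurableSet_Ioi
    (measurable_ofReal_div_sq C)

noncomputable def gridFloor (n : ℕ) (x : ℝ) : ℝ := ⌊(n : ℝ) * x⌋ / n

section gridFloor

variable {n : ℕ}

lemma gridFloor_le (hn : 0 < n) (x : ℝ) : gridFloor n x ≤ x := by
  rw [gridFloor, div_le_iff₀ (by positivity), mul_comm]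
  exact Int.floor_le _

lemma sub_inv_lt_gridFloor (hn : 0 < n) (x : ℝ) : x - (n : ℝ)⁻¹ < gridFloor n x := by
  have hn' : (0 : ℝ) < n := by positivity
  rw [gridFloor, lt_div_iff₀ hn', sub_mul, inv_mul_cancel₀ hn'.ne', mul_comm]
  exact Int.sub_one_lt_floor _

lemma le_gridFloor (hn : 0 < n) {x : ℝ} {k : ℤ} (hk : k ≤ x) : (k : ℝ) ≤ gridFloor n x := by
  have hn' : (0 : ℝ) < n := by positivity
  rw [gridFloor, le_div_iff₀ hn']
  exact_mod_cast Int.le_floor.mpr (by push_cast; nlinarith)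

end gridFloor

section StepTail

variable {E : Type*} [NormedAddCommGroup E] {g : ℝ → E} {C : ℝ}

lemma enorm_le_ofReal_div_sq (hC : 0 ≤ C) (hg : ∀ x : ℝ, x ≠ 0 → ‖g x‖ ≤ C / x ^ 2)
    {a y : ℝ} (ha : 0 < a) (hay : a ≤ |y|) : ‖g y‖ₑ ≤ ENNReal.ofReal (C / a ^ 2) := by
  have hy : y ≠ 0 := abs_pos.mp (ha.trans_le hay)
  rw [← ofReal_norm]
  refine ENNReal.ofReal_le_ofReal ((hg y hy).trans ?_)
  rw [← sq_abs y]
  gcongr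

lemma lintegral_Iio_neg_enorm_comp_gridFloor_le (hC : 0 ≤ C)
    (hg : ∀ x : ℝ, x ≠ 0 → ‖g x‖ ≤ C / x ^ 2) {n : ℕ} (hn : 0 < n) {b : ℝ} (hb : 0 < b) :
    ∫⁻ x in Iio (-b), ‖g (gridFloor n x)‖ₑ ≤ ENNReal.ofReal (C / b) := by
  rw [← lintegral_Iio_neg_div_sq hC hb]
  refine setLIntegral_mono' measurableSet_Iio fun x (hx : x < -b) => ?_
  have hfloor := gridFloor_le hn x
  rw [← neg_sq]
  exact enorm_le_ofReal_div_sq hC hg (by linarith) (by rw [abs_of_neg (by linarith)]; linarith)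

lemma lintegral_Ioc_enorm_comp_gridFloor_le (hC : 0 ≤ C)
    (hg : ∀ x : ℝ, x ≠ 0 → ‖g x‖ ≤ C / x ^ 2) {n N : ℕ} (hn : 0 < n) (hN : 0 < N) :
    ∫⁻ x in Ioc (N : ℝ) (N + (n : ℝ)⁻¹), ‖g (gridFloor n x)‖ₑ ≤ ENNReal.ofReal (C / N) := by
  have hN' : (0 : ℝ) < N := by positivity
  have hbound : ∀ x ∈ Ioc (N : ℝ) (N + (n : ℝ)⁻¹),
      ‖g (gridFloor n x)‖ₑ ≤ ENNReal.ofReal (C / N ^ 2) := fun x hx =>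
    enorm_le_ofReal_div_sq hC hg hN'
      ((le_gridFloor hn (k := N) (by exact_mod_cast hx.1.le)).trans (le_abs_self _))
  calc ∫⁻ x in Ioc (N : ℝ) (N + (n : ℝ)⁻¹), ‖g (gridFloor n x)‖ₑ
      ≤ ∫⁻ _ in Ioc (N : ℝ) (N + (n : ℝ)⁻¹), ENNReal.ofReal (C / N ^ 2) :=
        setLIntegral_mono' measurableSet_Ioc hbound
    _ = ENNReal.ofReal (C / N ^ 2 * (n : ℝ)⁻¹) := by
        rw [setLIntegral_const, Real.volume_Ioc, add_sub_cancel_left,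
          ENNReal.ofReal_mul (by positivity)]
    _ ≤ ENNReal.ofReal (C / N) := by
        have hn1 : (1 : ℝ) ≤ n := by exact_mod_cast hn
        have hN1 : (1 : ℝ) ≤ N := by exact_mod_cast hN
        refine ENNReal.ofReal_le_ofReal ?_
        calc C / N ^ 2 * (n : ℝ)⁻¹ ≤ C / N ^ 2 :=
              mul_le_of_le_one_right (by positivity) (inv_le_one_of_one_le₀ hn1)
          _ ≤ C / N := div_le_div_of_nonneg_left hC hN' (by nlinarith)

lemma lintegral_Ioi_enorm_comp_gridFloor_le (hC : 0 ≤ C)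
    (hg : ∀ x : ℝ, x ≠ 0 → ‖g x‖ ≤ C / x ^ 2) {n : ℕ} (hn : 0 < n) {b : ℝ} (hb : 0 < b) :
    ∫⁻ x in Ioi (b + (n : ℝ)⁻¹), ‖g (gridFloor n x)‖ₑ ≤ ENNReal.ofReal (C / b) := by
  rw [← lintegral_Ioi_add_div_sub_sq hC hb (n : ℝ)⁻¹]
  refine setLIntegral_mono' measurableSet_Ioi fun x (hx : b + (n : ℝ)⁻¹ < x) => ?_
  have hfloor := sub_inv_lt_gridFloor hn x
  exact enorm_le_ofReal_div_sq hC hg (by linarith) ((le_abs_self _).trans' hfloor.le)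

end StepTail

lemma setOf_lt_abs_eq_union {b c : ℝ} (hbc : b ≤ c) :
    {x : ℝ | b < |x|} = Iio (-b) ∪ (Ioc b c ∪ Ioi c) := by
  rw [Ioc_union_Ioi_eq_Ioi hbc]
  ext x
  simp only [mem_ofPred_eq, lt_abs, mem_union, mem_Iio, mem_Ioi]
  constructor <;> rintro (h | h) <;> first | (left; linarith) | (right; linarith)

/-- If `|g(x)| ≤ C/x²` for `x ≠ 0`, then the step function `g_{n,ext}(x) = g(⌊n x⌋/n)`
satisfies `∫_{|x| > N} |g_{n,ext}(x)| dx ≤ 3C/N`. -/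
theorem step_tail_bound (C : ℝ) (hC : 0 ≤ C) (g : ℝ → ℂ)
    (hg : ∀ x : ℝ, x ≠ 0 → ‖g x‖ ≤ C / x ^ 2)
    (n N : ℕ) (hn : 0 < n) (hN : 0 < N) :
    ∫⁻ x in {x : ℝ | (N : ℝ) < |x|},
        ‖g ((⌊(n : ℝ) * x⌋ : ℝ) / (n : ℝ))‖₊ ∂volume ≤ ENNReal.ofReal (3 * C / N) := by
  have hN' : (0 : ℝ) < N := by exact_mod_cast hN
  let a : ℝ := N + (n : ℝ)⁻¹
  calc ∫⁻ x in {x : ℝ | (N : ℝ) < |x|}, ‖g (gridFloor n x)‖ₑ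
      = ∫⁻ x in Iio (-(N : ℝ)) ∪ (Ioc (N : ℝ) a ∪ Ioi a), ‖g (gridFloor n x)‖ₑ := by
        rw [setOf_lt_abs_eq_union (le_add_of_nonneg_right (b := (n : ℝ)⁻¹) (by positivity))]
    _ ≤ (∫⁻ x in Iio (-(N : ℝ)), ‖g (gridFloor n x)‖ₑ) +
          ((∫⁻ x in Ioc (N : ℝ) a, ‖g (gridFloor n x)‖ₑ) + ∫⁻ x in Ioi a, ‖g (gridFloor n x)‖ₑ) :=
        (lintegral_union_le _ _ _).trans (add_le_add le_rfl (lintegral_union_le _ _ _))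
    _ ≤ ENNReal.ofReal (C / N) + (ENNReal.ofReal (C / N) + ENNReal.ofReal (C / N)) := by
        gcongr
        exacts [lintegral_Iio_neg_enorm_comp_gridFloor_le hC hg hn hN',
          lintegral_Ioc_enorm_comp_gridFloor_le hC hg hn hN,
          lintegral_Ioi_enorm_comp_gridFloor_le hC hg hn hN']
    _ = ENNReal.ofReal (3 * C / N) := by
        rw [← ENNReal.ofReal_add (by positivity) (by positivity),
          ← ENNReal.ofReal_add (by positivity) (by positivity)]
        ring_nf
end
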